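/- Let β ≥ 1 and for σ > 0 let λ_0(σ) be the unique positive root of λ^{β+1} - λ^β = σ. Then β(λ_0 - 1) is bounded as σ varies over a set S ⊆ (0,∞) if and only if βσ is bounded on S. Consequently, if βσ → ∞ then (λ_0 - 1)/((β+1)λ_0 - β) = (1/(β+1))(1 + o(1)). -/

import Mathlib

open Filter Real

/- Writing t = β(λ₀ - 1), the defining equation reads βσ = λ₀^β t. Since 1 ≤ λ₀^β ≤ e^t, this
gives t ≤ βσ ≤ t e^t ≤ e^{2t}, so t and βσ are bounded together and t → ∞ when βσ → ∞. The
throughput is then 1 - 1/((β+1)(λ₀-1)+1) after multiplication by β+1. -/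

lemma one_lt_of_pow_succ_sub_pow_pos {x : ℝ} (hx : 0 < x) {n : ℕ}
    (h : 0 < x ^ (n + 1) - x ^ n) : 1 < x := by
  by_contra! hx1
  have := pow_le_pow_of_le_one hx.le hx1 (Nat.le_add_right n 1)
  linarith

lemma sub_one_le_pow_succ_sub_pow {R : Type*} [CommRing R] [PartialOrder R] [IsOrderedRing R]
    {x : R} (hx : 1 ≤ x) (n : ℕ) : x - 1 ≤ x ^ (n + 1) - x ^ n := by
  calc x - 1 ≤ x ^ n * (x - 1) := le_mul_of_one_le_left (sub_nonneg.2 hx) (one_le_pow₀ hx)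
    _ = x ^ (n + 1) - x ^ n := by ring

lemma pow_le_exp_nat_mul_sub_one {x : ℝ} (hx : 0 ≤ x) (n : ℕ) :
    x ^ n ≤ exp (n * (x - 1)) := by
  rw [exp_nat_mul]
  exact pow_le_pow_left₀ hx (by linarith [add_one_le_exp (x - 1)]) n

lemma nat_mul_pow_succ_sub_pow_le_exp {x : ℝ} (hx : 1 ≤ x) (n : ℕ) :
    n * (x ^ (n + 1) - x ^ n) ≤ exp (2 * (n * (x - 1))) := by
  set t : ℝ := n * (x - 1)
  have ht : 0 ≤ t := mul_nonneg n.cast_nonneg (sub_nonneg.2 hx)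
  calc n * (x ^ (n + 1) - x ^ n) = x ^ n * t := by ring
    _ ≤ exp t * exp t :=
      mul_le_mul (pow_le_exp_nat_mul_sub_one (by linarith) n)
        (by linarith [add_one_le_exp t]) ht (exp_pos t).le
    _ = exp (2 * t) := by rw [← exp_add, two_mul]

lemma sub_one_div_mul_eq_one_sub_inv {b x : ℝ} (h : (b + 1) * (x - 1) + 1 ≠ 0) :
    (x - 1) / ((b + 1) * x - b) * (b + 1) = 1 - ((b + 1) * (x - 1) + 1)⁻¹ := by
  have hden : (b + 1) * x - b = (b + 1) * (x - 1) + 1 := by ring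
  rw [hden, div_mul_eq_mul_div, eq_sub_iff_add_eq, inv_eq_one_div, ← add_div,
    div_eq_one_iff_eq h]
  ring

lemma tendsto_sub_one_div_mul_nhds_one {α : Type*} {l : Filter α} {f : α → ℝ} {b : ℝ}
    (hf : Tendsto (fun a => (b + 1) * (f a - 1)) l atTop) :
    Tendsto (fun a => (f a - 1) / ((b + 1) * f a - b) * (b + 1)) l (nhds 1) := by
  have hden : Tendsto (fun a => (b + 1) * (f a - 1) + 1) l atTop :=
    tendsto_atTop_add_const_right _ 1 hf
  have hlim : Tendsto (fun a => 1 - ((b + 1) * (f a - 1) + 1)⁻¹) l (nhds 1) := by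
    simpa using tendsto_const_nhds.sub hden.inv_tendsto_atTop
  refine hlim.congr' ?_
  filter_upwards [hden.eventually_gt_atTop 0] with a ha
  exact (sub_one_div_mul_eq_one_sub_inv ha.ne').symm

theorem stmt16_general (β : ℕ)
    (lam : ℝ → ℝ)
    (hlam : ∀ σ : ℝ, 0 < σ → 0 < lam σ ∧ lam σ ^ (β + 1) - lam σ ^ β = σ) :
    (∀ S : Set ℝ, S ⊆ Set.Ioi 0 →
      ((∃ M : ℝ, ∀ σ ∈ S, β * (lam σ - 1) ≤ M) ↔ (∃ M : ℝ, ∀ σ ∈ S, β * σ ≤ M))) ∧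
    (∀ s : ℕ → ℝ, (∀ k, 0 < s k) →
      Tendsto (fun k => β * s k) atTop atTop →
      Tendsto (fun k => ((lam (s k) - 1) / ((β + 1) * lam (s k) - β)) * (β + 1))
        atTop (nhds 1)) := by
  have hone : ∀ σ, 0 < σ → 1 ≤ lam σ := fun σ hσ =>
    (one_lt_of_pow_succ_sub_pow_pos (hlam σ hσ).1 ((hlam σ hσ).2 ▸ hσ)).le
  have hlower : ∀ σ, 0 < σ → β * (lam σ - 1) ≤ β * σ := fun σ hσ =>
    calc β * (lam σ - 1) ≤ β * (lam σ ^ (β + 1) - lam σ ^ β) :=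
          mul_le_mul_of_nonneg_left (sub_one_le_pow_succ_sub_pow (hone σ hσ) β) β.cast_nonneg
      _ = β * σ := by rw [(hlam σ hσ).2]
  have hupper : ∀ σ, 0 < σ → β * σ ≤ exp (2 * (β * (lam σ - 1))) := fun σ hσ =>
    calc β * σ = β * (lam σ ^ (β + 1) - lam σ ^ β) := by rw [(hlam σ hσ).2]
      _ ≤ _ := nat_mul_pow_succ_sub_pow_le_exp (hone σ hσ) β
  constructor
  · intro S hS
    constructor
    · rintro ⟨M, hM⟩
      exact ⟨exp (2 * M), fun σ hσ =>
        (hupper σ (hS hσ)).trans (exp_le_exp.2 (by linarith [hM σ hσ]))⟩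
    · rintro ⟨M, hM⟩
      exact ⟨M, fun σ hσ => (hlower σ (hS hσ)).trans (hM σ hσ)⟩
  · intro s hs hsβ
    have hexp : Tendsto (fun k => exp (2 * (β * (lam (s k) - 1)))) atTop atTop :=
      tendsto_atTop_mono (fun k => hupper _ (hs k)) hsβ
    have htwice : Tendsto (fun k => 2 * ((β + 1) * (lam (s k) - 1))) atTop atTop :=
      tendsto_atTop_mono (fun k => by nlinarith [hone _ (hs k)]) (tendsto_exp_comp_atTop.1 hexp)
    exact tendsto_sub_one_div_mul_nhds_one ((tendsto_const_mul_atTop_of_pos two_pos).1 htwice)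

/-- let λ₀(σ) be the unique positive root of λ^{β+1} - λ^β = σ.
Then β(λ₀(σ)-1) is bounded on a set S ⊆ (0,∞) iff βσ is bounded on S;
consequently, along any sequence with βσ → ∞, the limiting average throughput
(λ₀-1)/((β+1)λ₀-β) equals (1/(β+1))(1+o(1)). -/
theorem stmt16 (β : ℕ) (hβ : 1 ≤ β)
    (lam : ℝ → ℝ)
    (hlam : ∀ σ : ℝ, 0 < σ → 0 < lam σ ∧ lam σ ^ (β + 1) - lam σ ^ β = σ) :
    (∀ S : Set ℝ, S ⊆ Set.Ioi 0 →
      ((∃ M : ℝ, ∀ σ ∈ S, β * (lam σ - 1) ≤ M) ↔ (∃ M : ℝ, ∀ σ ∈ S, β * σ ≤ M))) ∧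
    (∀ s : ℕ → ℝ, (∀ k, 0 < s k) →
      Tendsto (fun k => β * s k) atTop atTop →
      Tendsto (fun k => ((lam (s k) - 1) / ((β + 1) * lam (s k) - β)) * (β + 1))
        atTop (nhds 1)) :=
  stmt16_general β lam hlam
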